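/- In the Galois group G = Gal(K/k) of an (infinite) Galois extension with the Krull topology, a subgroup H ≤ G equals Gal(K/K^H) if and only if H is closed in the Krull topology; in particular every subgroup of the form Gal(K/U) for an intermediate field U is closed. -/

import Mathlib

open IntermediateField

/-- Krull's theorem: in `Gal(K/k)` of a Galois extension with the Krull topology,
a subgroup `H` satisfies `Gal(K/K^H) = H` iff `H` is closed; in particular every
subgroup of the form `Gal(K/U)` is closed. -/
theorem krull_closed_subgroup_correspondence
    (k K : Type*) [Field k] [Field K] [Algebra k K] [IsGalois k K] :
    (∀ H : Subgroup (K ≃ₐ[k] K),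
      fixingSubgroup (fixedField H) = H ↔ IsClosed (H : Set (K ≃ₐ[k] K))) ∧
    (∀ U : IntermediateField k K,
      IsClosed ((fixingSubgroup U : Subgroup (K ≃ₐ[k] K)) : Set (K ≃ₐ[k] K))) :=
  ⟨fun H => ⟨fun h => h ▸ InfiniteGalois.fixingSubgroup_isClosed _,
      fun hH => InfiniteGalois.fixingSubgroup_fixedField ⟨H, hH⟩⟩,
    fun U => InfiniteGalois.fixingSubgroup_isClosed U⟩
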